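/- Let A be a commutative ℂ-algebra, Ω¹ a finitely generated projective A-module, d : A → Ω¹ a ℂ-linear derivation, ∇ a connection on Ω¹, and g ∈ Ω¹ ⊗_A Ω¹ a nondegenerate metric. Then there exists a unique connection ∇* on Ω¹ (the adjoint connection of ∇ relative to g) satisfying the adjointness condition (∇* ⊗ id)(g) + (id ⊗ ∇)₍₁₂₎(g) = 0, where (id ⊗ ∇)₍₁₂₎(g) := Σ g²₍₋₁₎ ⊗ g¹ ⊗ g²₍₀₎ denotes the result of applying ∇ to the second tensor factor of g = Σ g¹ ⊗ g² and placing the differentiating (left-hand) output of ∇ in the first tensor position. Equivalently, ∇* is the unique connection with ((∇* − ∇) ⊗ id)(g) = −∇g, where ∇g := Σ (∇g¹) ⊗ g² + Σ g²₍₋₁₎ ⊗ g¹ ⊗ g²₍₀₎ is the derivation extension of ∇ to g keeping the differentiating output in the first tensor position. -/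

import Mathlib

noncomputable section

namespace WeakRiemannian

open scoped TensorProduct

variable (A : Type) [CommRing A] [Algebra ℂ A]
variable (Ω : Type) [AddCommGroup Ω] [Module ℂ Ω] [Module A Ω] [IsScalarTower ℂ A Ω]

/-- `d : A → Ω¹` is a (ℂ-linear) derivation. -/
def IsDerivation (d : A →ₗ[ℂ] Ω) : Prop :=
  ∀ f g : A, d (f * g) = f • d g + g • d f

/-- A connection on `Ω¹`: a ℂ-linear map `∇ : Ω¹ → Ω¹ ⊗_A Ω¹` with
`∇(fτ) = df ⊗ τ + f∇τ`. -/
def IsConnection (d : A →ₗ[ℂ] Ω) (nab : Ω →ₗ[ℂ] Ω ⊗[A] Ω) : Prop :=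
  ∀ (f : A) (τ : Ω), nab (f • τ) = d f ⊗ₜ[A] τ + f • nab τ

/-- `(φ ⊗ id)(g)` for `φ ∈ Hom_A(Ω¹, A)`. -/
def contractL (φ : Ω →ₗ[A] A) : Ω ⊗[A] Ω →ₗ[A] Ω :=
  TensorProduct.lift ((LinearMap.lsmul A Ω).comp φ)

/-- `(id ⊗ φ)(g)` for `φ ∈ Hom_A(Ω¹, A)`. -/
def contractR (φ : Ω →ₗ[A] A) : Ω ⊗[A] Ω →ₗ[A] Ω :=
  TensorProduct.lift (((LinearMap.lsmul A Ω).comp φ).flip)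

/-- `g ∈ Ω¹ ⊗_A Ω¹` is a nondegenerate metric: both induced maps
`Hom_A(Ω¹,A) → Ω¹` are bijective. -/
def IsMetric (g : Ω ⊗[A] Ω) : Prop :=
  Function.Bijective (fun φ : Ω →ₗ[A] A => contractL A Ω φ g) ∧
  Function.Bijective (fun φ : Ω →ₗ[A] A => contractR A Ω φ g)

/-- The adjointness condition `(∇* ⊗ id)(g) + (id ⊗ ∇)₍₁₂₎(g) = 0`, expressed
on any representation `g = Σᵢ uᵢ ⊗ vᵢ`:
`Σᵢ (∇* uᵢ) ⊗ vᵢ + Σᵢ (∇vᵢ)₍₋₁₎ ⊗ uᵢ ⊗ (∇vᵢ)₍₀₎ = 0` in `Ω¹ ⊗_A Ω¹ ⊗_A Ω¹`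
(the differentiating output of `∇` on the second leg is placed first). -/
def AdjointCondition (nabS nab : Ω →ₗ[ℂ] Ω ⊗[A] Ω) (g : Ω ⊗[A] Ω) : Prop :=
  ∀ (n : ℕ) (u v : Fin n → Ω), g = ∑ i, u i ⊗ₜ[A] v i →
    (∑ i, TensorProduct.assoc A Ω Ω Ω (nabS (u i) ⊗ₜ[A] v i)) +
      (∑ i, LinearMap.lTensor Ω (TensorProduct.mk A Ω Ω (u i)) (nab (v i))) = 0

/-- The equivalent condition `((∇* − ∇) ⊗ id)(g) = −∇g`, where
`∇g = Σ (∇g¹) ⊗ g² + Σ g²₍₋₁₎ ⊗ g¹ ⊗ g²₍₀₎` is the derivation extension of `∇`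
keeping the differentiating output in the first position. -/
def AdjointCondition' (nabS nab : Ω →ₗ[ℂ] Ω ⊗[A] Ω) (g : Ω ⊗[A] Ω) : Prop :=
  ∀ (n : ℕ) (u v : Fin n → Ω), g = ∑ i, u i ⊗ₜ[A] v i →
    (∑ i, TensorProduct.assoc A Ω Ω Ω ((nabS (u i) - nab (u i)) ⊗ₜ[A] v i)) =
      -((∑ i, TensorProduct.assoc A Ω Ω Ω (nab (u i) ⊗ₜ[A] v i)) +
        (∑ i, LinearMap.lTensor Ω (TensorProduct.mk A Ω Ω (u i)) (nab (v i))))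

/-!
Connections form an affine space over `Hom_A(Ω¹, Ω¹ ⊗_A Ω¹)`, and for `∇* = ∇ + D` the
adjointness condition reads `(D ⊗ id)(g) = -∇g`. Nondegeneracy of `g` makes `D ↦ (D ⊗ id)(g)`,
`Hom_A(Ω¹, P) → P ⊗_A Ω¹`, bijective for every `A`-module `P`: it is onto because
`p ⊗ (φ ⊗ id)(g)` is the image of `x ↦ φ(x) p`, and one-to-one because `D x = Σ ψ(g²) D(g¹)`
whenever `x = (id ⊗ ψ)(g)`.
-/

open TensorProduct Function

section

variable {R M : Type} [CommRing R] [AddCommGroup M] [Module R M]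
variable {P : Type*} [AddCommMonoid P] [Module R P]

theorem rid_lTensor_rTensor (D : M →ₗ[R] P) (ψ : M →ₗ[R] R) (t : M ⊗[R] M) :
    TensorProduct.rid R P (ψ.lTensor P (D.rTensor M t)) = D (contractR R M ψ t) := by
  induction t with
  | zero => simp
  | tmul x y => simp [contractR]
  | add s t hs ht => simp [hs, ht]

theorem rTensor_smulRight (φ : M →ₗ[R] R) (p : P) (t : M ⊗[R] M) :
    (φ.smulRight p).rTensor M t = p ⊗ₜ contractL R M φ t := by
  induction t with
  | zero => simp
  | tmul x y => simp [contractL, smul_tmul]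
  | add s t hs ht => simp [hs, ht, tmul_add]

theorem injective_rTensor_apply_of_surjective_contractR {g : M ⊗[R] M}
    (hR : Surjective fun ψ : M →ₗ[R] R => contractR R M ψ g) :
    Injective fun D : M →ₗ[R] P => D.rTensor M g := by
  intro D₁ D₂ h
  ext x
  obtain ⟨ψ, rfl⟩ := hR x
  rw [← rid_lTensor_rTensor, ← rid_lTensor_rTensor]
  exact congrArg (fun t => TensorProduct.rid R P (ψ.lTensor P t)) h

theorem surjective_rTensor_apply_of_surjective_contractL {g : M ⊗[R] M}
    (hL : Surjective fun φ : M →ₗ[R] R => contractL R M φ g) :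
    Surjective fun D : M →ₗ[R] P => D.rTensor M g := by
  intro y
  induction y with
  | zero => exact ⟨0, by simp⟩
  | tmul p m =>
    obtain ⟨φ, rfl⟩ := hL m
    exact ⟨φ.smulRight p, rTensor_smulRight φ p g⟩
  | add y z hy hz =>
    obtain ⟨D, rfl⟩ := hy
    obtain ⟨E, rfl⟩ := hz
    exact ⟨D + E, by simp [LinearMap.rTensor_add]⟩

theorem IsMetric.bijective_rTensor_apply {g : M ⊗[R] M} (hg : IsMetric R M g) :
    Bijective fun D : M →ₗ[R] P => D.rTensor M g :=
  ⟨injective_rTensor_apply_of_surjective_contractR hg.2.2,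
    surjective_rTensor_apply_of_surjective_contractL hg.1.2⟩

end

section

variable {A Ω} {d : A →ₗ[ℂ] Ω} {nab : Ω →ₗ[ℂ] Ω ⊗[A] Ω}

theorem IsConnection.add_linearMap (hnab : IsConnection A Ω d nab) (D : Ω →ₗ[A] Ω ⊗[A] Ω) :
    IsConnection A Ω d (nab + D.restrictScalars ℂ) := by
  intro f τ
  simp only [LinearMap.add_apply, LinearMap.coe_restrictScalars, hnab f τ, map_smul, smul_add,
    add_assoc]

theorem IsConnection.exists_eq_add_linearMap {nabS : Ω →ₗ[ℂ] Ω ⊗[A] Ω}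
    (hnabS : IsConnection A Ω d nabS) (hnab : IsConnection A Ω d nab) :
    ∃ D : Ω →ₗ[A] Ω ⊗[A] Ω, nabS = nab + D.restrictScalars ℂ := by
  let D : Ω →ₗ[A] Ω ⊗[A] Ω :=
    { toFun := fun τ => nabS τ - nab τ
      map_add' := fun τ σ => by simp only [map_add]; abel
      map_smul' := fun f τ => by
        simp only [hnabS f τ, hnab f τ, RingHom.id_apply, smul_sub, add_sub_add_left_eq_sub] }
  exact ⟨D, by ext τ; simp [D]⟩

/-- The derivation extension `∇g` of `∇` to `Ω¹ ⊗_A Ω¹`. It is well defined because moving `f`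
across the tensor sign produces the same term `df ⊗ u ⊗ v` on both sides. -/
def nablaTensor (hnab : IsConnection A Ω d nab) : Ω ⊗[A] Ω →+ Ω ⊗[A] (Ω ⊗[A] Ω) :=
  liftAddHom
    (AddMonoidHom.mk'
      (fun u => AddMonoidHom.mk'
        (fun v => TensorProduct.assoc A Ω Ω Ω (nab u ⊗ₜ v) + (mk A Ω Ω u).lTensor Ω (nab v))
        (fun v w => by simp only [tmul_add, map_add]; abel))
      (fun u w => by
        ext v
        simp only [AddMonoidHom.mk'_apply, AddMonoidHom.add_apply, map_add, add_tmul,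
          LinearMap.lTensor_add, LinearMap.add_apply]
        abel))
    (fun f u v => by
      simp only [AddMonoidHom.mk'_apply, hnab f u, hnab f v, add_tmul, smul_tmul', map_add,
        map_smul, assoc_tmul, tmul_smul, LinearMap.lTensor_smul, LinearMap.smul_apply,
        LinearMap.lTensor_tmul, mk_apply]
      abel)

theorem nablaTensor_eq_sum (hnab : IsConnection A Ω d nab) {n : ℕ} (u v : Fin n → Ω) :
    nablaTensor hnab (∑ i, u i ⊗ₜ v i) =
      (∑ i, TensorProduct.assoc A Ω Ω Ω (nab (u i) ⊗ₜ v i)) +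
        ∑ i, (mk A Ω Ω (u i)).lTensor Ω (nab (v i)) := by
  rw [map_sum, ← Finset.sum_add_distrib]
  rfl

theorem adjointCondition_add_linearMap_iff (hnab : IsConnection A Ω d nab)
    (D : Ω →ₗ[A] Ω ⊗[A] Ω) (g : Ω ⊗[A] Ω) :
    AdjointCondition A Ω (nab + D.restrictScalars ℂ) nab g ↔
      D.rTensor Ω g = -(TensorProduct.assoc A Ω Ω Ω).symm (nablaTensor hnab g) := by
  have hexpand : ∀ {n : ℕ} (u v : Fin n → Ω), g = ∑ i, u i ⊗ₜ v i →
      (∑ i, TensorProduct.assoc A Ω Ω Ω ((nab + D.restrictScalars ℂ) (u i) ⊗ₜ v i)) +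
          ∑ i, (mk A Ω Ω (u i)).lTensor Ω (nab (v i)) =
        TensorProduct.assoc A Ω Ω Ω (D.rTensor Ω g) + nablaTensor hnab g := by
    rintro n u v rfl
    rw [nablaTensor_eq_sum]
    simp only [map_sum, LinearMap.rTensor_tmul, LinearMap.add_apply,
      LinearMap.coe_restrictScalars, add_tmul, map_add, Finset.sum_add_distrib]
    abel
  rw [← map_neg, LinearEquiv.eq_symm_apply, eq_neg_iff_add_eq_zero]
  constructor
  · intro h
    obtain ⟨n, u, v, hrep⟩ := exists_sum_tmul_eq g
    rw [← hexpand u v hrep]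
    exact h n u v hrep
  · intro h n u v hrep
    rw [hexpand u v hrep]
    exact h

theorem adjointCondition_iff_adjointCondition' (nabS nab : Ω →ₗ[ℂ] Ω ⊗[A] Ω) (g : Ω ⊗[A] Ω) :
    AdjointCondition A Ω nabS nab g ↔ AdjointCondition' A Ω nabS nab g := by
  refine forall₄_congr fun n u v _ => ?_
  simp only [sub_tmul, map_sub, Finset.sum_sub_distrib]
  rw [← add_eq_zero_iff_eq_neg, ← add_assoc, sub_add_cancel]

end

theorem adjoint_connection_exists_unique
    (d : A →ₗ[ℂ] Ω)
    (nab : Ω →ₗ[ℂ] Ω ⊗[A] Ω) (hnab : IsConnection A Ω d nab)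
    (g : Ω ⊗[A] Ω) (hg : IsMetric A Ω g) :
    (∀ nabS : Ω →ₗ[ℂ] Ω ⊗[A] Ω, IsConnection A Ω d nabS →
      (AdjointCondition A Ω nabS nab g ↔ AdjointCondition' A Ω nabS nab g)) ∧
    (∃! nabS : Ω →ₗ[ℂ] Ω ⊗[A] Ω,
      IsConnection A Ω d nabS ∧ AdjointCondition A Ω nabS nab g) := by
  obtain ⟨D, hD, hD_unique⟩ := (IsMetric.bijective_rTensor_apply hg).existsUnique
    (-(TensorProduct.assoc A Ω Ω Ω).symm (nablaTensor hnab g))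
  refine ⟨fun nabS _ => adjointCondition_iff_adjointCondition' nabS nab g,
    nab + D.restrictScalars ℂ,
    ⟨hnab.add_linearMap D, (adjointCondition_add_linearMap_iff hnab D g).2 hD⟩, ?_⟩
  rintro nabS ⟨hnabS, hadj⟩
  obtain ⟨D', rfl⟩ := hnabS.exists_eq_add_linearMap hnab
  rw [hD_unique D' ((adjointCondition_add_linearMap_iff hnab D' g).1 hadj)]

end WeakRiemannian
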